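/- For every real z with 0 < |z| < 1/4, the series ∑_{x=0}^∞ C(2x+1, x)·z^x converges (HasSum) to ((1 − 4z)^{−1/2} − 1)/(2z); equivalently, 2z·∑_{x=0}^∞ C(2x+1, x)·z^x = (1 − 4z)^{−1/2} − 1. -/

import Mathlib

/-! The central binomial series is the binomial series of `(1 - x) ^ (-1/2)` at `x = 4z`: its
`n`-th coefficient `(1/2)(3/2)⋯(n - 1/2) / n!` is `C(2n, n) / 4ⁿ`. Since `C(2n+2, n+1) = 2 C(2n+1, n)`,
the series in question is the tail of the central binomial series divided by `2z`. -/

open Nat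

theorem Nat.centralBinom_succ_eq_two_mul_choose (n : ℕ) :
    centralBinom (n + 1) = 2 * (2 * n + 1).choose n := by
  rw [centralBinom_eq_two_mul_choose, show 2 * (n + 1) = 2 * n + 1 + 1 by ring, choose_succ_succ',
    choose_symm_half]
  ring

theorem four_pow_mul_ascPochhammer_eval_half {K : Type*} [Field K] [CharZero K] (n : ℕ) :
    4 ^ n * (ascPochhammer K n).eval (1 / 2) = n ! * centralBinom n := by
  induction n with
  | zero => simp
  | succ n ih =>
    have hrec : ((n : K) + 1) * centralBinom (n + 1) = 2 * (2 * n + 1) * centralBinom n := by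
      exact_mod_cast succ_mul_centralBinom_succ n
    rw [ascPochhammer_succ_eval, factorial_succ, cast_mul, pow_succ]
    push_cast
    linear_combination (2 * (2 * (n : K) + 1)) * ih - (n ! : K) * hrec

theorem Ring.multichoose_half_eq_centralBinom_div_four_pow {K : Type*} [Field K] [CharZero K]
    (n : ℕ) : Ring.multichoose (1 / 2 : K) n = centralBinom n / 4 ^ n := by
  have hfact := Ring.factorial_nsmul_multichoose_eq_ascPochhammer (1 / 2 : K) n
  rw [Polynomial.ascPochhammer_smeval_eq_eval, nsmul_eq_mul] at hfact
  have h := four_pow_mul_ascPochhammer_eval_half (K := K) n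
  rw [← hfact] at h
  rw [eq_div_iff (pow_ne_zero _ (by norm_num))]
  apply mul_left_cancel₀ (cast_ne_zero.mpr (factorial_ne_zero n) : (n ! : K) ≠ 0)
  linear_combination h

theorem hasSum_centralBinom_mul_pow {z : ℝ} (hz : |z| < 1 / 4) :
    HasSum (fun n ↦ (centralBinom n : ℝ) * z ^ n) ((1 - 4 * z) ^ (-(1 : ℝ) / 2)) := by
  have h4z : |4 * z| < 1 := by rw [abs_mul, abs_of_pos four_pos]; linarith
  have hmem : 4 * z ∈ Metric.eball (0 : ℝ) 1 := by
    rw [Metric.mem_eball, edist_dist, Real.dist_eq, sub_zero]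
    exact ENNReal.ofReal_lt_one.mpr h4z
  have hcoeff (n : ℕ) :
      Ring.choose ((1 / 2 : ℝ) + n - 1) n • (4 * z) ^ n = centralBinom n * z ^ n := by
    rw [← Ring.multichoose_eq, Ring.multichoose_half_eq_centralBinom_div_four_pow, smul_eq_mul,
      mul_pow]
    field_simp
  have hvalue : 1 / (1 - 4 * z) ^ (1 / 2 : ℝ) = (1 - 4 * z) ^ (-(1 : ℝ) / 2) := by
    rw [neg_div, Real.rpow_neg (by linarith [le_abs_self (4 * z)]), one_div]
  have hsum := (Real.one_div_one_sub_rpow_hasFPowerSeriesOnBall_zero (1 / 2)).hasSum hmem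
  simpa only [FormalMultilinearSeries.ofScalars_apply_eq, zero_add, hcoeff, hvalue] using hsum

theorem hasSum_choose_two_mul_add_one_mul_pow {z : ℝ} (hz : z ≠ 0) (hz' : |z| < 1 / 4) :
    HasSum (fun n ↦ ((2 * n + 1).choose n : ℝ) * z ^ n)
      (((1 - 4 * z) ^ (-(1 : ℝ) / 2) - 1) / (2 * z)) := by
  have hshift :=
    ((hasSum_nat_add_iff' 1).mpr (hasSum_centralBinom_mul_pow hz')).div_const (2 * z)
  have hterm (n : ℕ) :
      (centralBinom (n + 1) : ℝ) * z ^ (n + 1) / (2 * z) = ((2 * n + 1).choose n : ℝ) * z ^ n := by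
    rw [centralBinom_succ_eq_two_mul_choose]
    push_cast
    field_simp
    ring
  simpa only [hterm, Finset.range_one, Finset.sum_singleton, centralBinom_zero, cast_one,
    pow_zero, mul_one] using hshift

/-- `∑_{x=0}^∞ C(2x+1, x) z^x = ((1 - 4z)^{-1/2} - 1)/(2z)` for `0 < |z| < 1/4`;
equivalently `2z ∑_x C(2x+1, x) z^x = (1 - 4z)^{-1/2} - 1`. -/
theorem central_binomial_variant_gf (z : ℝ) (hz : 0 < |z|) (hz' : |z| < 1 / 4) :
    HasSum (fun x : ℕ => (Nat.choose (2 * x + 1) x : ℝ) * z ^ x)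
      (((1 - 4 * z) ^ (-(1 : ℝ) / 2) - 1) / (2 * z)) ∧
    2 * z * ∑' x : ℕ, (Nat.choose (2 * x + 1) x : ℝ) * z ^ x
      = (1 - 4 * z) ^ (-(1 : ℝ) / 2) - 1 := by
  have hz0 : z ≠ 0 := abs_pos.mp hz
  have hsum := hasSum_choose_two_mul_add_one_mul_pow hz0 hz'
  exact ⟨hsum, by rw [hsum.tsum_eq]; field_simp⟩
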